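/- arXiv:1302.0504 — 8 statements merged into one kernel-verified Lean document; each statement's English description precedes it below -/
import Mathlib

section
/- Let 𝕃 be the abelian group given by generators x₁, x₂, x₃, x₄ and relations 2x₁ = 2x₂ = 2x₃ = 2x₄, and set c := 2x₁. Then every element x of 𝕃 can be written uniquely in normal form x = l₁x₁ + l₂x₂ + l₃x₃ + l₄x₄ + l·c with l₁, l₂, l₃, l₄ ∈ {0,1} and l ∈ ℤ. -/
/-- The subgroup of relations `2e₁ = 2e₂ = 2e₃ = 2e₄` in `ℤ⁴`. -/
def Lrel : AddSubgroup (Fin 4 → ℤ) :=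
  AddSubgroup.closure
    { (2 : ℤ) • Pi.single (0 : Fin 4) (1 : ℤ) - (2 : ℤ) • Pi.single 1 1,
      (2 : ℤ) • Pi.single (0 : Fin 4) (1 : ℤ) - (2 : ℤ) • Pi.single 2 1,
      (2 : ℤ) • Pi.single (0 : Fin 4) (1 : ℤ) - (2 : ℤ) • Pi.single 3 1 }

/-- The group `𝕃` of type `(2,2,2,2)`. -/
abbrev Lgrp : Type := (Fin 4 → ℤ) ⧸ Lrel

/-- The generators `x₁, x₂, x₃, x₄` of `𝕃`. -/
def xL (i : Fin 4) : Lgrp := QuotientAddGroup.mk (Pi.single i 1)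

/-- The canonical element `c = 2x₁`. -/
def cL : Lgrp := (2 : ℤ) • xL 0

/-!
Since `2 • xᵢ = c`, reducing every coefficient of `∑ vᵢ • xᵢ` modulo 2 produces a normal form.
Normal forms are separated by two homomorphisms out of `𝕃`: the parity map `xᵢ ↦ eᵢ ∈ (ℤ/2)⁴`
kills `c` and so reads off the `lᵢ`, and then the degree map `xᵢ ↦ 1 ∈ ℤ`, with value
`∑ lᵢ + 2l`, reads off `l`.
-/

namespace Lgrp

lemma two_zsmul_xL (i : Fin 4) : (2 : ℤ) • xL i = cL := by
  rw [cL, xL, xL, ← QuotientAddGroup.mk_zsmul, ← QuotientAddGroup.mk_zsmul, eq_comm,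
    QuotientAddGroup.eq_iff_sub_mem]
  fin_cases i
  · simp
  all_goals exact AddSubgroup.subset_closure (by simp)

lemma zsmul_xL (n : ℤ) (i : Fin 4) : n • xL i = (n % 2) • xL i + (n / 2) • cL := by
  conv_lhs => rw [← Int.emod_add_mul_ediv n 2]
  rw [add_zsmul, mul_comm (2 : ℤ), mul_zsmul, two_zsmul_xL]

lemma mk_eq_sum (v : Fin 4 → ℤ) : (QuotientAddGroup.mk v : Lgrp) = ∑ i, v i • xL i := by
  simp only [xL, ← QuotientAddGroup.mk_zsmul, ← QuotientAddGroup.mk_sum]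
  congr 1
  ext j
  simp [Pi.single_apply]

variable {M : Type*} [AddCommGroup M]

def lift (f : Fin 4 → M) (hf : ∀ i, (2 : ℤ) • f i = (2 : ℤ) • f 0) : Lgrp →+ M :=
  QuotientAddGroup.lift Lrel (Fintype.linearCombination ℤ f).toAddMonoidHom <| by
    rw [Lrel, AddSubgroup.closure_le]
    rintro w (rfl | rfl | rfl) <;>
      simp only [SetLike.mem_coe, AddMonoidHom.mem_ker, LinearMap.toAddMonoidHom_coe, map_sub,
        map_zsmul, Fintype.linearCombination_apply_single, one_smul, hf, sub_self]

@[simp]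
lemma lift_xL (f : Fin 4 → M) (hf) (i : Fin 4) : lift f hf (xL i) = f i := by
  simp [lift, xL]

def parity : Lgrp →+ (Fin 4 → ZMod 2) :=
  lift (Pi.single · 1) fun _ => by simp only [two_zsmul, CharTwo.add_self_eq_zero]

def degree : Lgrp →+ ℤ :=
  lift 1 fun _ => rfl

def normalForm (p : (Fin 4 → ℤ) × ℤ) : Lgrp := ∑ i, p.1 i • xL i + p.2 • cL

def normalCoeffs : Set ((Fin 4 → ℤ) × ℤ) := {p | ∀ i, p.1 i = 0 ∨ p.1 i = 1}

lemma parity_normalForm (p : (Fin 4 → ℤ) × ℤ) :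
    parity (normalForm p) = ((↑) : ℤ → ZMod 2) ∘ p.1 := by
  ext j
  simp [normalForm, parity, ← two_zsmul_xL 0, Pi.single_apply, two_zsmul,
    CharTwo.add_self_eq_zero]

lemma degree_normalForm (p : (Fin 4 → ℤ) × ℤ) :
    degree (normalForm p) = ∑ i, p.1 i + 2 * p.2 := by
  simp [normalForm, degree, ← two_zsmul_xL 0]
  ring

lemma exists_normalForm_eq (x : Lgrp) : ∃ p ∈ normalCoeffs, normalForm p = x := by
  obtain ⟨v, rfl⟩ := QuotientAddGroup.mk_surjective x
  refine ⟨(fun i => v i % 2, ∑ i, v i / 2), fun i => Int.emod_two_eq_zero_or_one (v i), ?_⟩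
  have hsum : (∑ i, v i / 2) • cL = ∑ i, (v i / 2) • cL := map_sum (zmultiplesHom Lgrp cL) _ _
  rw [normalForm, mk_eq_sum, hsum, ← Finset.sum_add_distrib]
  exact Finset.sum_congr rfl fun i _ => (zsmul_xL (v i) i).symm

lemma normalForm_injOn : Set.InjOn normalForm normalCoeffs := by
  intro p hp q hq hpq
  have hcoeff : p.1 = q.1 := by
    ext i
    have hparity := congrFun (congrArg parity hpq) i
    simp only [parity_normalForm, Function.comp_apply] at hparity
    rcases hp i with h | h <;> rcases hq i with h' | h' <;> simp_all
  have hdeg := congrArg degree hpq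
  simp only [degree_normalForm, hcoeff] at hdeg
  exact Prod.ext hcoeff (by omega)

end Lgrp

/-- Every element of `𝕃` has a unique normal form
`x = l₁x₁ + l₂x₂ + l₃x₃ + l₄x₄ + l·c` with `lᵢ ∈ {0,1}` and `l ∈ ℤ`. -/
theorem normal_form_exists_unique (x : Lgrp) :
    ∃! p : (Fin 4 → ℤ) × ℤ,
      (∀ i, p.1 i = 0 ∨ p.1 i = 1) ∧ x = ∑ i, p.1 i • xL i + p.2 • cL := by
  obtain ⟨p, hp, rfl⟩ := Lgrp.exists_normalForm_eq x
  exact ⟨p, ⟨hp, rfl⟩, fun q ⟨hq, hqp⟩ => Lgrp.normalForm_injOn hq hp hqp.symm⟩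
end

section
/- Let 𝕃 be the abelian group given by generators x₁, x₂, x₃, x₄ and relations 2x₁ = 2x₂ = 2x₃ = 2x₄, with canonical element c := 2x₁ and dualizing element ω := 2c − (x₁+x₂+x₃+x₄). Then ω ≠ 0 and 2ω = 0, i.e., ω is an element of order exactly two in 𝕃. -/
/-- The dualizing element `ω = 2c − (x₁+x₂+x₃+x₄)`. -/
def ωL : Lgrp := (2 : ℤ) • cL - (xL 0 + xL 1 + xL 2 + xL 3)

/-!
Every `2xᵢ` equals `c`, so `2ω = 4c - 4c = 0`. The parity of a fixed coordinate of `ℤ⁴` is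
unchanged by the relations, hence descends to `𝕃 → ℤ/2`; the first coordinate sends `ω` to
`4 - 1 = 1`, so `ω ≠ 0`.
-/

def coordParity (j : Fin 4) : (Fin 4 → ℤ) →+ ZMod 2 :=
  (Int.castAddHom (ZMod 2)).comp (Pi.evalAddMonoidHom (fun _ => ℤ) j)

lemma Lrel_le_ker_coordParity (j : Fin 4) : Lrel ≤ (coordParity j).ker := by
  rw [Lrel, AddSubgroup.closure_le]
  rintro _ (rfl | rfl | rfl) <;>
    rw [SetLike.mem_coe, AddMonoidHom.mem_ker, ← smul_sub, map_zsmul, two_zsmul,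
      CharTwo.add_self_eq_zero]

def coordParityL (j : Fin 4) : Lgrp →+ ZMod 2 :=
  QuotientAddGroup.lift Lrel (coordParity j) (Lrel_le_ker_coordParity j)

lemma coordParityL_xL (i j : Fin 4) : coordParityL j (xL i) = if i = j then 1 else 0 := by
  simp [coordParityL, xL, coordParity, Pi.single_apply, eq_comm]

lemma two_zsmul_xL (i : Fin 4) : (2 : ℤ) • xL i = cL := by
  rw [cL, eq_comm, ← sub_eq_zero, xL, xL, ← QuotientAddGroup.mk_zsmul,
    ← QuotientAddGroup.mk_zsmul, ← QuotientAddGroup.mk_sub, QuotientAddGroup.eq_zero_iff]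
  fin_cases i
  · simp
  all_goals exact AddSubgroup.subset_closure (by simp)

lemma two_zsmul_ωL : (2 : ℤ) • ωL = 0 := by
  simp only [ωL, zsmul_sub, zsmul_add, two_zsmul_xL]
  module

lemma coordParityL_zero_ωL : coordParityL 0 ωL = 1 := by
  simp only [ωL, cL, map_sub, map_add, map_zsmul, coordParityL_xL]
  decide

/-- The dualizing element `ω` has order exactly two in `𝕃`: `ω ≠ 0` and `2ω = 0`. -/
theorem omega_order_two : ωL ≠ 0 ∧ (2 : ℤ) • ωL = 0 :=
  ⟨fun h => by simpa [h] using coordParityL_zero_ωL, two_zsmul_ωL⟩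
end

section
/- Let 𝕃 be the abelian group given by generators x₁, x₂, x₃, x₄ and relations 2x₁ = 2x₂ = 2x₃ = 2x₄, let c := 2x₁, and let P be the submonoid of 𝕃 generated by x₁, x₂, x₃, x₄. For x ∈ 𝕃 with normal form x = l₁x₁ + l₂x₂ + l₃x₃ + l₄x₄ + l·c (lᵢ ∈ {0,1}, l ∈ ℤ), one has x ∈ P if and only if l ≥ 0. Consequently P ∩ (−P) = {0}, so the relation x ≤ y defined by y − x ∈ P is a partial order on 𝕃 making 𝕃 an ordered group with cone of positive elements P. -/
/-- The cone `P` of positive elements: the submonoid generated by `x₁, x₂, x₃, x₄`. -/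
def Lpos : AddSubmonoid Lgrp := AddSubmonoid.closure {xL 0, xL 1, xL 2, xL 3}

/-!
Two homomorphisms out of `𝕃` detect positivity: the degree `Ldeg` (sum of the coordinates, so
`Ldeg xᵢ = 1` and `Ldeg c = 2`) and the parity vector `Lparity` (the coordinates mod 2). The
Hamming weight of the parity vector is subadditive and agrees with the degree on the generators,
so it is bounded by the degree on `P`. For `x = Σ lᵢxᵢ + l·c` in normal form the weight is
`Σ lᵢ` and the degree is `Σ lᵢ + 2l`, hence `x ∈ P` forces `l ≥ 0`. As the degree is positive on
the generators, the only element of `P` of degree `0` is `0`, which gives `P ∩ (−P) = {0}`.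
-/

namespace AddSubmonoid

variable {M N : Type*} [AddMonoid M] [AddCommMonoid N] [PartialOrder N] [IsOrderedAddMonoid N]
  {s : Set M} {x : M}

theorem le_of_mem_closure_of_subadditive (g : M → N) (f : M →+ N) (hg₀ : g 0 ≤ 0)
    (hg : ∀ a b, g (a + b) ≤ g a + g b) (hs : ∀ a ∈ s, g a ≤ f a) (hx : x ∈ closure s) :
    g x ≤ f x := by
  induction hx using closure_induction with
  | mem a ha => exact hs a ha
  | zero => simpa using hg₀
  | add a b _ _ ha hb => exact (hg a b).trans (by simpa using add_le_add ha hb)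

theorem map_nonneg_of_mem_closure (f : M →+ N) (hs : ∀ a ∈ s, 0 ≤ f a) (hx : x ∈ closure s) :
    0 ≤ f x :=
  le_of_mem_closure_of_subadditive 0 f le_rfl (fun _ _ => by simp) hs hx

theorem eq_zero_of_mem_closure_of_map_eq_zero (f : M →+ N) (hs : ∀ a ∈ s, 0 < f a)
    (hx : x ∈ closure s) (hfx : f x = 0) : x = 0 := by
  have hs' : ∀ a ∈ s, 0 ≤ f a := fun a ha => (hs a ha).le
  induction hx using closure_induction with
  | mem a ha => exact absurd hfx (hs a ha).ne'
  | zero => rfl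
  | add a b ha hb iha ihb =>
    rw [map_add] at hfx
    obtain ⟨hfa, hfb⟩ := (add_eq_zero_iff_of_nonneg (map_nonneg_of_mem_closure f hs' ha)
      (map_nonneg_of_mem_closure f hs' hb)).1 hfx
    rw [iha hfa, ihb hfb, add_zero]

end AddSubmonoid

theorem hammingNorm_add_le {ι : Type*} [Fintype ι] {β : ι → Type*} [∀ i, AddZeroClass (β i)]
    [∀ i, DecidableEq (β i)] (x y : ∀ i, β i) :
    hammingNorm (x + y) ≤ hammingNorm x + hammingNorm y := by
  classical
  refine (Finset.card_le_card fun i => ?_).trans (Finset.card_union_le _ _)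
  simp only [Finset.mem_filter, Finset.mem_univ, true_and, Finset.mem_union, Pi.add_apply]
  contrapose!
  rintro ⟨hx, hy⟩
  simp [hx, hy]

theorem hammingNorm_single {ι : Type*} [Fintype ι] [DecidableEq ι] {β : ι → Type*}
    [∀ i, Zero (β i)] [∀ i, DecidableEq (β i)] (i : ι) {a : β i} (ha : a ≠ 0) :
    hammingNorm (Pi.single i a) = 1 := by
  rw [hammingNorm, Finset.card_eq_one]
  refine ⟨i, Finset.ext fun j => ?_⟩
  by_cases h : j = i
  · subst h
    simp [ha]
  · simp [h]

theorem hammingNorm_intCast_zmod_two {ι : Type*} [Fintype ι] {l : ι → ℤ}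
    (hl : ∀ i, l i = 0 ∨ l i = 1) : (hammingNorm (fun i => (l i : ZMod 2)) : ℤ) = ∑ i, l i := by
  classical
  rw [hammingNorm, Finset.card_filter, Nat.cast_sum]
  refine Finset.sum_congr rfl fun i _ => ?_
  rcases hl i with h | h <;> simp [h]

theorem Lrel_le_ker {A : Type*} [AddCommGroup A] (φ : (Fin 4 → ℤ) →+ A)
    (h : ∀ i, (2 : ℤ) • φ (Pi.single i 1) = (2 : ℤ) • φ (Pi.single 0 1)) : Lrel ≤ φ.ker := by
  rw [Lrel, AddSubgroup.closure_le]
  rintro v (rfl | rfl | rfl) <;>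
    simp only [SetLike.mem_coe, AddMonoidHom.mem_ker, map_sub, map_zsmul, h, sub_self]

def Ldeg : Lgrp →+ ℤ :=
  QuotientAddGroup.lift Lrel (∑ i, Pi.evalAddMonoidHom (fun _ => ℤ) i)
    (Lrel_le_ker _ fun i => by simp [Pi.single_apply])

def Lparity : Lgrp →+ (Fin 4 → ZMod 2) :=
  QuotientAddGroup.lift Lrel ((Int.castAddHom (ZMod 2)).compLeft (Fin 4))
    (Lrel_le_ker _ fun i => by simp only [CharTwo.two_zsmul])

theorem Lpos_eq_closure_range : Lpos = AddSubmonoid.closure (Set.range xL) := by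
  unfold Lpos
  congr 1
  ext x
  simp [Fin.exists_fin_succ, eq_comm]

theorem xL_mem_Lpos (i : Fin 4) : xL i ∈ Lpos :=
  Lpos_eq_closure_range ▸ AddSubmonoid.subset_closure (Set.mem_range_self i)

theorem Ldeg_xL (i : Fin 4) : Ldeg (xL i) = 1 := by
  simp [Ldeg, xL]

theorem Lparity_xL (i : Fin 4) : Lparity (xL i) = Pi.single i 1 := by
  ext j
  simp [Lparity, xL, Pi.single_apply]

theorem Ldeg_cL : Ldeg cL = 2 := by
  simp [cL, Ldeg_xL]

theorem Lparity_cL : Lparity cL = 0 := by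
  rw [cL, map_zsmul, CharTwo.two_zsmul]

theorem hammingNorm_Lparity_le_Ldeg {x : Lgrp} (hx : x ∈ Lpos) :
    (hammingNorm (Lparity x) : ℤ) ≤ Ldeg x := by
  rw [Lpos_eq_closure_range] at hx
  refine AddSubmonoid.le_of_mem_closure_of_subadditive (fun a => (hammingNorm (Lparity a) : ℤ))
    Ldeg (by simp) (fun a b => ?_) ?_ hx
  · exact_mod_cast map_add Lparity a b ▸ hammingNorm_add_le _ _
  · rintro _ ⟨i, rfl⟩
    rw [Lparity_xL, Ldeg_xL, hammingNorm_single i one_ne_zero, Nat.cast_one]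

theorem eq_zero_of_mem_Lpos_of_neg_mem_Lpos {x : Lgrp} (hx : x ∈ Lpos) (hnx : -x ∈ Lpos) :
    x = 0 := by
  rw [Lpos_eq_closure_range] at hx hnx
  have hgen : ∀ a ∈ Set.range xL, 0 < Ldeg a := by
    rintro _ ⟨i, rfl⟩
    simp [Ldeg_xL]
  have h₁ := AddSubmonoid.map_nonneg_of_mem_closure Ldeg (fun a ha => (hgen a ha).le) hx
  have h₂ := AddSubmonoid.map_nonneg_of_mem_closure Ldeg (fun a ha => (hgen a ha).le) hnx
  rw [map_neg] at h₂
  exact AddSubmonoid.eq_zero_of_mem_closure_of_map_eq_zero Ldeg hgen hx (by omega)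

theorem Ldeg_normalForm (l : Fin 4 → ℤ) (m : ℤ) :
    Ldeg (∑ i, l i • xL i + m • cL) = ∑ i, l i + 2 * m := by
  simp [Ldeg_xL, Ldeg_cL, mul_comm]

theorem Lparity_normalForm (l : Fin 4 → ℤ) (m : ℤ) :
    Lparity (∑ i, l i • xL i + m • cL) = fun i => (l i : ZMod 2) := by
  ext j
  simp [Lparity_xL, Lparity_cL, Pi.single_apply]

theorem normalForm_mem_Lpos {l : Fin 4 → ℤ} {m : ℤ} (hl : ∀ i, 0 ≤ l i) (hm : 0 ≤ m) :
    ∑ i, l i • xL i + m • cL ∈ Lpos := by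
  have zsmul_mem {k : ℤ} (hk : 0 ≤ k) {a : Lgrp} (ha : a ∈ Lpos) : k • a ∈ Lpos := by
    lift k to ℕ using hk
    exact natCast_zsmul a k ▸ Lpos.nsmul_mem ha k
  refine Lpos.add_mem (Lpos.sum_mem fun i _ => zsmul_mem (hl i) (xL_mem_Lpos i)) ?_
  rw [cL, smul_smul]
  exact zsmul_mem (by omega) (xL_mem_Lpos 0)

/-- For `x ∈ 𝕃` in normal form `x = Σᵢ lᵢxᵢ + l·c` (`lᵢ ∈ {0,1}`, `l ∈ ℤ`), one has `x ∈ P`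
iff `l ≥ 0`. Consequently `P ∩ (−P) = {0}`, and the relation `x ≤ y ↔ y − x ∈ P` is a
(translation-invariant) partial order on `𝕃` with positive cone `P`. -/
theorem pos_cone_partial_order :
    (∀ (l : Fin 4 → ℤ) (m : ℤ), (∀ i, l i = 0 ∨ l i = 1) →
      ((∑ i, l i • xL i + m • cL) ∈ Lpos ↔ 0 ≤ m)) ∧
    (∀ x : Lgrp, (x ∈ Lpos ∧ -x ∈ Lpos) ↔ x = 0) ∧
    (∀ x : Lgrp, x - x ∈ Lpos) ∧
    (∀ x y z : Lgrp, y - x ∈ Lpos → z - y ∈ Lpos → z - x ∈ Lpos) ∧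
    (∀ x y : Lgrp, y - x ∈ Lpos → x - y ∈ Lpos → x = y) ∧
    (∀ x y z : Lgrp, y - x ∈ Lpos → (y + z) - (x + z) ∈ Lpos) := by
  refine ⟨fun l m hl => ⟨fun hx => ?_, fun hm => ?_⟩, fun x => ⟨fun h => ?_, ?_⟩,
    fun x => by simp [Lpos.zero_mem], fun x y z hxy hyz => ?_, fun x y hxy hyx => ?_,
    fun x y z hxy => by rwa [add_sub_add_right_eq_sub]⟩
  · have hweight := hammingNorm_Lparity_le_Ldeg hx
    rw [Lparity_normalForm, hammingNorm_intCast_zmod_two hl, Ldeg_normalForm] at hweight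
    omega
  · exact normalForm_mem_Lpos (fun i => by rcases hl i with h | h <;> omega) hm
  · exact eq_zero_of_mem_Lpos_of_neg_mem_Lpos h.1 h.2
  · rintro rfl
    simp [Lpos.zero_mem]
  · simpa using Lpos.add_mem hyz hxy
  · exact (sub_eq_zero.1 (eq_zero_of_mem_Lpos_of_neg_mem_Lpos hxy (by simpa using hyx))).symm
end

section
/- Let k be a field with char k ≠ 2, λ ∈ k with λ ≠ 0, 1, and S = k[X₁,X₂,X₃,X₄]/(X₃² − X₂² − X₁², X₄² − X₂² − λX₁²), graded by 𝕃 via deg xᵢ = xᵢ. Fix i ≠ j in {1,2,3,4} and an integer l ≥ 1. Then the homogeneous component S_{l·c} is the internal direct sum of the one-dimensional k-span of x_j^{2l} and the subspace xᵢ·S_{l·c − xᵢ} (which has k-dimension l); in particular, x_j^{2l} does not lie in xᵢ·S_{l·c − xᵢ}, i.e., x_j^{2l} cannot be factored through multiplication by xᵢ. -/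
open MvPolynomial

/-- The defining ideal `(X₃² − X₂² − X₁², X₄² − X₂² − λX₁²)`. -/
noncomputable def relIdeal (k : Type*) [Field k] (lam : k) : Ideal (MvPolynomial (Fin 4) k) :=
  Ideal.span
    {(X 2 : MvPolynomial (Fin 4) k) ^ 2 - X 1 ^ 2 - X 0 ^ 2,
     (X 3 : MvPolynomial (Fin 4) k) ^ 2 - X 1 ^ 2 - C lam * X 0 ^ 2}

/-- The homogeneous coordinate algebra `S` of the weighted projective line of type
`(2,2,2,2;λ)`. -/
abbrev Sring (k : Type*) [Field k] (lam : k) : Type _ :=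
  MvPolynomial (Fin 4) k ⧸ relIdeal k lam

/-- The `𝕃`-degree of a monomial exponent `a ∈ ℕ⁴`, namely `Σᵢ aᵢ·xᵢ`. -/
noncomputable def mdeg (a : Fin 4 →₀ ℕ) : Lgrp := ∑ i, (a i : ℤ) • xL i

/-- The homogeneous component `S_x ⊆ S` of degree `x ∈ 𝕃`: the `k`-span of the images in `S`
of the monomials of `𝕃`-degree `x`. -/
noncomputable def Sx (k : Type*) [Field k] (lam : k) (x : Lgrp) : Submodule k (Sring k lam) :=
  Submodule.span k (Ideal.Quotient.mk (relIdeal k lam) ''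
    { m | ∃ a : Fin 4 →₀ ℕ, mdeg a = x ∧ m = monomial a (1 : k) })

/-- The image `xᵢ ∈ S` of the variable `Xᵢ`. -/
noncomputable def xg (k : Type*) [Field k] (lam : k) (i : Fin 4) : Sring k lam :=
  Ideal.Quotient.mk (relIdeal k lam) (X i)

/-
Modulo the relations, every square `xₜ²` is a linear form `ℓₜ` in `u = x₁²`, `v = x₂²`. Hence
`u ↦ x₁², v ↦ x₂²` maps the binary forms of degree `l` onto `S_{l·c}`, and the multiples
`ℓᵢ·(forms of degree l - 1)` onto `xᵢ·S_{l·c - xᵢ}` (a monomial of degree `l·c - xᵢ` has odd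
exponent at `xᵢ`). This map is injective: sending each `xₜ` to a square root of `ℓₜ` in an
algebraic closure of `k(u, v)` recovers the inclusion `k[u, v] ⊆ k(u, v)`. Since `λ ≠ 0, 1`, the
forms `ℓᵢ` and `ℓⱼ` are not proportional, so `ℓⱼ^l` does not vanish at the zero of `ℓᵢ`, whereas
every multiple of `ℓᵢ` does; thus `k·ℓⱼ^l` meets `ℓᵢ·(forms of degree l - 1)` trivially, and the
dimensions `1 + l = l + 1` add up.
-/

open Finset

theorem MvPolynomial.finrank_homogeneousSubmodule {σ R : Type*} [Fintype σ] [CommSemiring R]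
    [StrongRankCondition R] (n : ℕ) :
    Module.finrank R (homogeneousSubmodule σ R n) = (Fintype.card σ + n - 1).choose n := by
  classical
  have hset : {d : σ →₀ ℕ | d.degree = n} = (univ.finsuppAntidiag n : Finset (σ →₀ ℕ)) := by
    ext d; simp [Finsupp.degree_eq_sum]
  rw [homogeneousSubmodule_eq_finsupp_supported, hset,
    LinearEquiv.finrank_eq (AddMonoidAlgebra.supportedEquivFinsupp _), Module.finrank_finsupp_self]
  simp [card_finsuppAntidiag_nat_eq_choose]

namespace MvPolynomial

instance {σ R : Type*} [Finite σ] [CommSemiring R] (n : ℕ) :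
    Module.Finite R (homogeneousSubmodule σ R n) :=
  Module.Finite.iff_fg.2 (homogeneousSubmodule_fg σ R n)

variable {σ k : Type*} [Field k] {L f : MvPolynomial σ k}

theorem notMem_map_mulLeft_of_eval {v : σ → k} (hL : eval v L = 0) (hf : eval v f ≠ 0)
    (p : Submodule k (MvPolynomial σ k)) : f ∉ p.map (LinearMap.mulLeft k L) := by
  rintro ⟨g, -, rfl⟩
  simp [hL] at hf

theorem span_singleton_inf_map_mulLeft_eq_bot {v : σ → k} (hL : eval v L = 0)
    (hf : eval v f ≠ 0) (p : Submodule k (MvPolynomial σ k)) :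
    k ∙ f ⊓ p.map (LinearMap.mulLeft k L) = ⊥ :=
  disjoint_iff.1 ((Submodule.disjoint_span_singleton' (by rintro rfl; simp at hf)).2
    (notMem_map_mulLeft_of_eval hL hf p)).symm

theorem finrank_map_mulLeft (hL : L ≠ 0) (p : Submodule k (MvPolynomial σ k)) :
    Module.finrank k (p.map (LinearMap.mulLeft k L)) = Module.finrank k p :=
  (Submodule.equivMapOfInjective _ (mul_right_injective₀ hL) p).finrank_eq.symm

theorem map_mulLeft_homogeneousSubmodule_le {m : ℕ} (hL : L.IsHomogeneous m) (n : ℕ) :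
    (homogeneousSubmodule σ k n).map (LinearMap.mulLeft k L) ≤
      homogeneousSubmodule σ k (m + n) := by
  rintro _ ⟨g, hg, rfl⟩
  exact hL.mul hg

theorem finrank_homogeneousSubmodule_fin_two (n : ℕ) :
    Module.finrank k (homogeneousSubmodule (Fin 2) k n) = n + 1 := by
  rw [finrank_homogeneousSubmodule, Fintype.card_fin, show 2 + n - 1 = n + 1 by omega,
    Nat.choose_succ_self_right]

theorem span_pow_sup_map_mulLeft_eq {L L' : MvPolynomial (Fin 2) k} (hL : L.IsHomogeneous 1)
    (hL0 : L ≠ 0) (hL' : L'.IsHomogeneous 1) {v : Fin 2 → k} (hv : eval v L = 0)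
    (hv' : eval v L' ≠ 0) (n : ℕ) :
    k ∙ L' ^ (n + 1) ⊔ (homogeneousSubmodule (Fin 2) k n).map (LinearMap.mulLeft k L) =
      homogeneousSubmodule (Fin 2) k (n + 1) := by
  have hv'' : eval v (L' ^ (n + 1)) ≠ 0 := by simpa using pow_ne_zero (n + 1) hv'
  have hpow : L' ^ (n + 1) ≠ 0 := fun h => hv'' (by rw [h, map_zero])
  refine Submodule.eq_of_le_of_finrank_eq (sup_le ?_ ?_) ?_
  · rw [Submodule.span_singleton_le_iff_mem, mem_homogeneousSubmodule]
    simpa using hL'.pow (n + 1)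
  · simpa [add_comm] using map_mulLeft_homogeneousSubmodule_le hL n
  · have := Submodule.finrank_sup_add_finrank_inf_eq (k ∙ L' ^ (n + 1))
      ((homogeneousSubmodule (Fin 2) k n).map (LinearMap.mulLeft k L))
    rw [span_singleton_inf_map_mulLeft_eq_bot hv hv'', finrank_bot, finrank_span_singleton hpow,
      finrank_map_mulLeft hL0, finrank_homogeneousSubmodule_fin_two] at this
    rw [finrank_homogeneousSubmodule_fin_two]
    omega

end MvPolynomial

section Grading

theorem two_nsmul_xL (t : Fin 4) : 2 • xL t = cL := by
  rw [cL, ← natCast_zsmul, xL, xL, ← QuotientAddGroup.mk_zsmul, ← QuotientAddGroup.mk_zsmul,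
    QuotientAddGroup.eq, neg_add_eq_sub]
  fin_cases t
  · simp
  all_goals exact AddSubgroup.subset_closure (by simp)

theorem nsmul_cL_sub_xL (n : ℕ) (t : Fin 4) : (n + 1) • cL - xL t = n • cL + xL t := by
  rw [succ_nsmul, ← two_nsmul_xL t]
  abel

theorem mdeg_add (a b : Fin 4 →₀ ℕ) : mdeg (a + b) = mdeg a + mdeg b := by
  simp only [mdeg, Finsupp.coe_add, Pi.add_apply, Nat.cast_add, add_zsmul, sum_add_distrib]

theorem mdeg_single (t : Fin 4) (e : ℕ) : mdeg (Finsupp.single t e) = e • xL t := by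
  rw [mdeg, sum_eq_single t (fun s _ hs => by simp [Finsupp.single_eq_of_ne hs]) (by simp)]
  simp

noncomputable def degParity : Lgrp →+ ℤ × (Fin 4 → ZMod 2) :=
  QuotientAddGroup.lift Lrel
    { toFun := fun a => (∑ t, a t, fun t => (a t : ZMod 2))
      map_zero' := by ext <;> simp
      map_add' := fun a b => by ext <;> simp [sum_add_distrib] }
    (by
      rw [Lrel, AddSubgroup.closure_le]
      rintro _ (rfl | rfl | rfl) <;>
        simp [Fin.sum_univ_four, funext_iff, Fin.forall_fin_succ] <;> decide)

theorem degParity_xL (t : Fin 4) : degParity (xL t) = (1, Pi.single t 1) := by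
  ext s
  · simp [degParity, xL]
  · simp [degParity, xL, Pi.single_apply]

theorem degParity_mdeg (a : Fin 4 →₀ ℕ) :
    degParity (mdeg a) = (∑ t, (a t : ℤ), fun t => (a t : ZMod 2)) := by
  ext t <;> simp [mdeg, degParity_xL, Prod.fst_sum, Prod.snd_sum, Finset.sum_apply, Pi.single_apply]

theorem degParity_cL : degParity cL = (2, 0) := by
  rw [← two_nsmul_xL 0, map_nsmul, degParity_xL]
  ext t
  · simp
  · simp [Pi.single_apply]; intro; decide

theorem even_of_mdeg_eq_nsmul_cL {a : Fin 4 →₀ ℕ} {l : ℕ} (h : mdeg a = l • cL) :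
    (∀ t, Even (a t)) ∧ ∑ t, a t = 2 * l := by
  have h' := congrArg degParity h
  simp only [degParity_mdeg, map_nsmul, degParity_cL, Prod.smul_mk, smul_zero, Prod.mk.injEq,
    funext_iff, Pi.zero_apply, ZMod.natCast_eq_zero_iff_even, nsmul_eq_mul] at h'
  exact ⟨h'.2, by exact_mod_cast h'.1.trans (mul_comm _ _)⟩

theorem ne_zero_of_mdeg_eq_nsmul_cL_add_xL {a : Fin 4 →₀ ℕ} {m : ℕ} {t : Fin 4}
    (h : mdeg a = m • cL + xL t) : a t ≠ 0 := by
  intro ht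
  have h' := congrFun (congrArg (fun x => (degParity x).2) h) t
  simp [degParity_mdeg, degParity_cL, degParity_xL, ht] at h'

end Grading

section Coordinates

variable {k : Type*} [Field k] {lam : k}

noncomputable def squareForm (lam : k) : Fin 4 → MvPolynomial (Fin 2) k :=
  ![X 0, X 1, X 0 + X 1, C lam * X 0 + X 1]

noncomputable def squaresHom (k : Type*) [Field k] (lam : k) :
    MvPolynomial (Fin 2) k →ₐ[k] Sring k lam :=
  aeval ![xg k lam 0 ^ 2, xg k lam 1 ^ 2]

theorem isHomogeneous_squareForm (t : Fin 4) : (squareForm lam t).IsHomogeneous 1 := by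
  fin_cases t
  · exact isHomogeneous_X k 0
  · exact isHomogeneous_X k 1
  · exact (isHomogeneous_X k 0).add (isHomogeneous_X k 1)
  · exact (isHomogeneous_C_mul_X lam 0).add (isHomogeneous_X k 1)

theorem xg_sq (t : Fin 4) : xg k lam t ^ 2 = squaresHom k lam (squareForm lam t) := by
  have hrel : ∀ f ∈ ({X 2 ^ 2 - X 1 ^ 2 - X 0 ^ 2, X 3 ^ 2 - X 1 ^ 2 - C lam * X 0 ^ 2} :
      Set (MvPolynomial (Fin 4) k)), Ideal.Quotient.mk (relIdeal k lam) f = 0 :=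
    fun f hf => Ideal.Quotient.eq_zero_iff_mem.2 (Ideal.subset_span hf)
  have h2 := hrel _ (Set.mem_insert _ _)
  have h3 := hrel _ (Set.mem_insert_of_mem _ rfl)
  have hC : Ideal.Quotient.mk (relIdeal k lam) (C lam) = algebraMap k (Sring k lam) lam := rfl
  simp only [map_sub, map_pow, map_mul, hC] at h2 h3
  fin_cases t <;> simp [squaresHom, squareForm, xg]
  · linear_combination h2
  · linear_combination h3

theorem squaresHom_injective : Function.Injective (squaresHom k lam) := by
  let K := AlgebraicClosure (FractionRing (MvPolynomial (Fin 2) k))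
  choose r hr using fun x : K => IsAlgClosed.exists_pow_nat_eq x two_pos
  let φ : MvPolynomial (Fin 4) k →ₐ[k] K :=
    aeval fun t => r (algebraMap (MvPolynomial (Fin 2) k) K (squareForm lam t))
  have hφ : ∀ f ∈ relIdeal k lam, φ f = 0 := by
    suffices relIdeal k lam ≤ RingHom.ker φ from fun f hf => this hf
    rw [relIdeal, Ideal.span_le]
    rintro _ (rfl | rfl) <;>
      simp [φ, hr, squareForm, IsScalarTower.algebraMap_apply k (MvPolynomial (Fin 2) k) K]
  let ψ : Sring k lam →ₐ[k] K := Ideal.Quotient.liftₐ _ φ hφ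
  have hψ_xg : ∀ t, ψ (xg k lam t) = φ (X t) := fun _ => rfl
  have hψ : ψ.comp (squaresHom k lam) = IsScalarTower.toAlgHom k _ K := by
    ext t
    fin_cases t <;> simp [squaresHom, hψ_xg, φ, hr, squareForm]
  refine Function.Injective.of_comp (f := ψ) ?_
  rw [← AlgHom.coe_comp, hψ, IsScalarTower.coe_toAlgHom',
    IsScalarTower.algebraMap_eq _ (FractionRing (MvPolynomial (Fin 2) k)) K, RingHom.coe_comp]
  exact (RingHom.injective _).comp (IsFractionRing.injective _ _)

theorem exists_eval_squareForm (h0 : lam ≠ 0) (h1 : lam ≠ 1) {i j : Fin 4} (hij : i ≠ j) :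
    ∃ v : Fin 2 → k, eval v (squareForm lam i) = 0 ∧ eval v (squareForm lam j) ≠ 0 := by
  fin_cases i <;> [use ![0, 1]; use ![1, 0]; use ![1, -1]; use ![1, -lam]] <;>
    fin_cases j <;> simp_all [squareForm, ← sub_eq_add_neg, sub_eq_zero, Ne.symm h1]

end Coordinates

section Components

variable {k : Type*} [Field k] {lam : k}

theorem mk_monomial_eq_prod (a : Fin 4 →₀ ℕ) :
    Ideal.Quotient.mk (relIdeal k lam) (monomial a 1) = ∏ t, xg k lam t ^ a t := by
  rw [monomial_eq, C_1, one_mul, Finsupp.prod_fintype _ _ (fun _ => pow_zero _), map_prod]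
  simp [xg]

theorem mk_monomial_mem_Sx {a : Fin 4 →₀ ℕ} {x : Lgrp} (h : mdeg a = x) :
    Ideal.Quotient.mk (relIdeal k lam) (monomial a 1) ∈ Sx k lam x :=
  Submodule.subset_span ⟨_, ⟨a, h, rfl⟩, rfl⟩

theorem Sx_nsmul_cL (l : ℕ) :
    Sx k lam (l • cL) =
      (homogeneousSubmodule (Fin 2) k l).map (squaresHom k lam).toLinearMap := by
  apply le_antisymm
  · rw [Sx, Submodule.span_le]
    rintro _ ⟨_, ⟨a, ha, rfl⟩, rfl⟩
    obtain ⟨heven, hsum⟩ := even_of_mdeg_eq_nsmul_cL ha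
    have hhalf : ∑ t, a t / 2 = l := by
      have : 2 * ∑ t, a t / 2 = 2 * l := by
        rw [mul_sum, ← hsum]
        exact sum_congr rfl fun t _ => Nat.two_mul_div_two_of_even (heven t)
      omega
    refine ⟨∏ t, squareForm lam t ^ (a t / 2), ?_, ?_⟩
    · rw [SetLike.mem_coe, mem_homogeneousSubmodule, ← hhalf]
      simpa using IsHomogeneous.prod _ _ (fun t => 1 * (a t / 2))
        (fun t _ => (isHomogeneous_squareForm t).pow _)
    · simp only [AlgHom.toLinearMap_apply, map_prod, map_pow, ← xg_sq, ← pow_mul,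
        mk_monomial_eq_prod]
      exact prod_congr rfl fun t _ => by rw [Nat.two_mul_div_two_of_even (heven t)]
  · rw [homogeneousSubmodule_eq_finsupp_supported, AddMonoidAlgebra.supported_eq_span_single,
      Submodule.map_span_le]
    rintro _ ⟨d, hd, rfl⟩
    have hd : d 0 + d 1 = l := by simpa [Finsupp.degree_eq_sum] using hd
    have hmon : squaresHom k lam (monomial d 1) = Ideal.Quotient.mk (relIdeal k lam)
        (monomial (Finsupp.single 0 (2 * d 0) + Finsupp.single 1 (2 * d 1)) 1) := by
      rw [mk_monomial_eq_prod, squaresHom, aeval_monomial,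
        Finsupp.prod_fintype _ _ (fun _ => pow_zero _)]
      simp [Fin.prod_univ_two, Fin.prod_univ_four, pow_mul]
    refine hmon ▸ mk_monomial_mem_Sx ?_
    rw [mdeg_add, mdeg_single, mdeg_single, mul_nsmul, mul_nsmul,
      two_nsmul_xL, two_nsmul_xL, ← add_nsmul, hd]

theorem Sx_add_xL {x : Lgrp} {t : Fin 4} (h : ∀ a, mdeg a = x + xL t → a t ≠ 0) :
    Sx k lam (x + xL t) = (Sx k lam x).map (LinearMap.mulLeft k (xg k lam t)) := by
  have hmul : ∀ a, xg k lam t * Ideal.Quotient.mk (relIdeal k lam) (monomial a 1) =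
      Ideal.Quotient.mk (relIdeal k lam) (monomial (a + Finsupp.single t 1) 1) := by
    intro a
    rw [xg, ← map_mul, X, monomial_mul, one_mul, add_comm]
  apply le_antisymm
  · rw [Sx, Submodule.span_le]
    rintro _ ⟨_, ⟨b, hb, rfl⟩, rfl⟩
    have hle : Finsupp.single t 1 ≤ b :=
      Finsupp.single_le_iff.2 (Nat.one_le_iff_ne_zero.2 (h b hb))
    refine ⟨_, mk_monomial_mem_Sx (a := b - Finsupp.single t 1) ?_, ?_⟩
    · apply add_right_cancel (b := xL t)
      rw [← hb, ← one_nsmul (xL t), ← mdeg_single, ← mdeg_add, tsub_add_cancel_of_le hle]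
    · rw [LinearMap.mulLeft_apply, hmul, tsub_add_cancel_of_le hle]
  · rw [Sx, Submodule.map_span_le]
    rintro _ ⟨_, ⟨a, ha, rfl⟩, rfl⟩
    rw [LinearMap.mulLeft_apply, hmul]
    exact mk_monomial_mem_Sx (by rw [mdeg_add, mdeg_single, ha, one_nsmul])

theorem map_mulLeft_Sx_nsmul_cL_sub_xL (n : ℕ) (t : Fin 4) :
    (Sx k lam ((n + 1) • cL - xL t)).map (LinearMap.mulLeft k (xg k lam t)) =
      ((homogeneousSubmodule (Fin 2) k n).map (LinearMap.mulLeft k (squareForm lam t))).map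
        (squaresHom k lam).toLinearMap := by
  rw [nsmul_cL_sub_xL, Sx_add_xL (fun _ => ne_zero_of_mdeg_eq_nsmul_cL_add_xL), Sx_nsmul_cL]
  simp only [← Submodule.map_comp]
  congr 1
  refine LinearMap.ext fun f => ?_
  simp [← mul_assoc, ← pow_two, xg_sq]

theorem xg_pow_two_mul (t : Fin 4) (l : ℕ) :
    xg k lam t ^ (2 * l) = squaresHom k lam (squareForm lam t ^ l) := by
  rw [pow_mul, xg_sq, map_pow]

end Components

theorem component_direct_sum_decomposition_general (k : Type*) [Field k]
    (lam : k) (h0 : lam ≠ 0) (h1 : lam ≠ 1)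
    (i j : Fin 4) (hij : i ≠ j) (l : ℕ) (hl : 1 ≤ l) :
    (Submodule.span k {xg k lam j ^ (2 * l)} ⊔
      Submodule.map (LinearMap.mulLeft k (xg k lam i)) (Sx k lam (l • cL - xL i)) =
        Sx k lam (l • cL)) ∧
    (Submodule.span k {xg k lam j ^ (2 * l)} ⊓
      Submodule.map (LinearMap.mulLeft k (xg k lam i)) (Sx k lam (l • cL - xL i)) = ⊥) ∧
    Module.finrank k
      (Submodule.map (LinearMap.mulLeft k (xg k lam i)) (Sx k lam (l • cL - xL i))) = l ∧
    xg k lam j ^ (2 * l) ∉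
      Submodule.map (LinearMap.mulLeft k (xg k lam i)) (Sx k lam (l • cL - xL i)) := by
  obtain ⟨n, rfl⟩ : ∃ n, l = n + 1 := ⟨l - 1, by omega⟩
  obtain ⟨v, hvi, hvj⟩ := exists_eval_squareForm h0 h1 hij
  obtain ⟨w, -, hwi⟩ := exists_eval_squareForm h0 h1 hij.symm
  have hLi : squareForm lam i ≠ 0 := fun h => hwi (by rw [h, map_zero])
  have hvj' : MvPolynomial.eval v (squareForm lam j ^ (n + 1)) ≠ 0 := by
    simpa using pow_ne_zero (n + 1) hvj
  set ρ := (squaresHom k lam).toLinearMap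
  have hρ : Function.Injective ρ := squaresHom_injective
  rw [map_mulLeft_Sx_nsmul_cL_sub_xL, Sx_nsmul_cL, xg_pow_two_mul, ← AlgHom.toLinearMap_apply,
    ← Set.image_singleton, Submodule.span_image, ← Submodule.map_sup, ← Submodule.map_inf _ hρ,
    MvPolynomial.span_singleton_inf_map_mulLeft_eq_bot hvi hvj',
    MvPolynomial.span_pow_sup_map_mulLeft_eq (isHomogeneous_squareForm i) hLi
      (isHomogeneous_squareForm j) hvi hvj]
  refine ⟨rfl, Submodule.map_bot _, ?_, ?_⟩
  · rw [← (Submodule.equivMapOfInjective _ hρ _).finrank_eq, MvPolynomial.finrank_map_mulLeft hLi,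
      MvPolynomial.finrank_homogeneousSubmodule_fin_two]
  · rw [← Submodule.mem_comap, Submodule.comap_map_eq_of_injective hρ]
    exact MvPolynomial.notMem_map_mulLeft_of_eval hvi hvj' _

/-- For `i ≠ j` and `l ≥ 1`, the component `S_{l·c}` is the internal direct sum of the
line `k·x_j^{2l}` and the subspace `xᵢ·S_{l·c − xᵢ}`, the latter of dimension `l`;
in particular `x_j^{2l}` cannot be factored through multiplication by `xᵢ`. -/
theorem component_direct_sum_decomposition (k : Type*) [Field k] (hchar : ringChar k ≠ 2)
    (lam : k) (h0 : lam ≠ 0) (h1 : lam ≠ 1)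
    (i j : Fin 4) (hij : i ≠ j) (l : ℕ) (hl : 1 ≤ l) :
    (Submodule.span k {xg k lam j ^ (2 * l)} ⊔
      Submodule.map (LinearMap.mulLeft k (xg k lam i)) (Sx k lam (l • cL - xL i)) =
        Sx k lam (l • cL)) ∧
    (Submodule.span k {xg k lam j ^ (2 * l)} ⊓
      Submodule.map (LinearMap.mulLeft k (xg k lam i)) (Sx k lam (l • cL - xL i)) = ⊥) ∧
    Module.finrank k
      (Submodule.map (LinearMap.mulLeft k (xg k lam i)) (Sx k lam (l • cL - xL i))) = l ∧
    xg k lam j ^ (2 * l) ∉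
      Submodule.map (LinearMap.mulLeft k (xg k lam i)) (Sx k lam (l • cL - xL i)) :=
  component_direct_sum_decomposition_general k lam h0 h1 i j hij l hl
end

section
/- Let k be a field with char k ≠ 2, λ ∈ k with λ ≠ 0, 1, and S = k[X₁,X₂,X₃,X₄]/(X₃² − X₂² − X₁², X₄² − X₂² − λX₁²), graded by 𝕃 via deg xᵢ = xᵢ. Fix i ∈ {1,2,3,4} and let x ∈ 𝕃 have normal form x = l₁x₁ + l₂x₂ + l₃x₃ + l₄x₄ + l·c with lᵢ = 1 and l ≥ 0. Then multiplication by xᵢ induces a k-linear isomorphism S_{x − xᵢ} ≅ S_x. -/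
open MvPolynomial

open scoped nonZeroDivisors

theorem AdjoinRoot.of_mem_nonZeroDivisors {R : Type*} [CommRing R] {f : Polynomial R}
    (hf : f.Monic) {a : R} (ha : a ∈ R⁰) : of f a ∈ (AdjoinRoot f)⁰ := by
  have := hf.free_adjoinRoot
  refine mem_nonZeroDivisors_iff_left.mpr fun y hy => ?_
  refine Module.Flat.isSMulRegular_of_nonZeroDivisors ha (show a • y = a • 0 from ?_)
  rwa [smul_zero, Algebra.smul_def, AdjoinRoot.algebraMap_eq]

theorem AdjoinRoot.root_X_pow_sub_C_pow {R : Type*} [CommRing R] (n : ℕ) (s : R) :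
    root (Polynomial.X ^ n - Polynomial.C s) ^ n = of _ s := by
  have h := eval₂_root (Polynomial.X ^ n - Polynomial.C s)
  rwa [Polynomial.eval₂_sub, Polynomial.eval₂_pow, Polynomial.eval₂_X, Polynomial.eval₂_C,
    sub_eq_zero] at h

theorem AdjoinRoot.root_X_pow_sub_C_mem_nonZeroDivisors {R : Type*} [CommRing R] {n : ℕ}
    (hn : n ≠ 0) {s : R} (hs : s ∈ R⁰) :
    root (Polynomial.X ^ n - Polynomial.C s) ∈
      (AdjoinRoot (Polynomial.X ^ n - Polynomial.C s))⁰ := by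
  refine mem_nonZeroDivisors_iff_left.mpr fun y hy => ?_
  refine mem_nonZeroDivisors_iff_left.mp
    (of_mem_nonZeroDivisors (Polynomial.monic_X_pow_sub_C s hn) hs) y ?_
  rw [← AdjoinRoot.root_X_pow_sub_C_pow, ← pow_sub_one_mul hn (root _), mul_assoc, hy, mul_zero]

theorem sq_add_C_mul_sq_mem_nonZeroDivisors {R : Type*} [CommRing R] [IsDomain R] (c : R) :
    (X 1 ^ 2 + C c * X 0 ^ 2 : MvPolynomial (Fin 2) R) ∈ (MvPolynomial (Fin 2) R)⁰ :=
  mem_nonZeroDivisors_of_ne_zero fun h => by simpa using congrArg (eval ![0, 1]) h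

section Tower

variable (k : Type*) [Field k] (lam : k)

noncomputable abbrev towerPolyB : Polynomial (MvPolynomial (Fin 2) k) :=
  Polynomial.X ^ 2 - Polynomial.C (X 1 ^ 2 + X 0 ^ 2)

abbrev TowerB : Type _ := AdjoinRoot (towerPolyB k)

noncomputable abbrev towerPolyC : Polynomial (TowerB k) :=
  Polynomial.X ^ 2 - Polynomial.C (AdjoinRoot.of _ (X 1 ^ 2 + C lam * X 0 ^ 2))

abbrev TowerC : Type _ := AdjoinRoot (towerPolyC k lam)

noncomputable def towerGen : Fin 4 → TowerC k lam :=
  ![AdjoinRoot.of _ (AdjoinRoot.of _ (X 0)), AdjoinRoot.of _ (AdjoinRoot.of _ (X 1)),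
    AdjoinRoot.of _ (AdjoinRoot.root _), AdjoinRoot.root _]

theorem towerGen_mem_nonZeroDivisors (i : Fin 4) : towerGen k lam i ∈ (TowerC k lam)⁰ := by
  have hp := sq_add_C_mul_sq_mem_nonZeroDivisors (1 : k)
  rw [C_1, one_mul] at hp
  have hmonic {R : Type _} [CommRing R] (s : R) := Polynomial.monic_X_pow_sub_C s two_ne_zero
  have hofof {a : MvPolynomial (Fin 2) k} (ha : a ∈ _⁰) :
      AdjoinRoot.of _ (AdjoinRoot.of _ a) ∈ (TowerC k lam)⁰ :=
    AdjoinRoot.of_mem_nonZeroDivisors (hmonic _) (AdjoinRoot.of_mem_nonZeroDivisors (hmonic _) ha)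
  fin_cases i
  · exact hofof (mem_nonZeroDivisors_of_ne_zero (X_ne_zero 0))
  · exact hofof (mem_nonZeroDivisors_of_ne_zero (X_ne_zero 1))
  · exact AdjoinRoot.of_mem_nonZeroDivisors (hmonic _)
      (AdjoinRoot.root_X_pow_sub_C_mem_nonZeroDivisors two_ne_zero hp)
  · exact AdjoinRoot.root_X_pow_sub_C_mem_nonZeroDivisors two_ne_zero
      (AdjoinRoot.of_mem_nonZeroDivisors (hmonic _)
        (sq_add_C_mul_sq_mem_nonZeroDivisors lam))

theorem relIdeal_le_ker_aeval_towerGen : relIdeal k lam ≤ RingHom.ker (aeval (towerGen k lam)) := by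
  rw [relIdeal, Ideal.span_le]
  rintro g (rfl | rfl) <;>
    simp only [towerGen, SetLike.mem_coe, RingHom.mem_ker, map_sub, map_mul, map_pow, aeval_X,
      algHom_C, Matrix.cons_val, Matrix.cons_val_one, Matrix.cons_val_zero]
  · rw [← map_pow, AdjoinRoot.root_X_pow_sub_C_pow]
    simp only [map_add, map_pow]
    ring
  · have hc : algebraMap k (TowerC k lam) lam =
        AdjoinRoot.of (towerPolyC k lam) (AdjoinRoot.of (towerPolyB k) (C lam)) := rfl
    rw [AdjoinRoot.root_X_pow_sub_C_pow, hc]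
    simp only [map_add, map_mul, map_pow]
    ring

noncomputable def toTower : Sring k lam →ₐ[k] TowerC k lam :=
  Ideal.Quotient.liftₐ _ (aeval (towerGen k lam)) fun _ ha =>
    RingHom.mem_ker.mp (relIdeal_le_ker_aeval_towerGen k lam ha)

theorem xg_two_sq : xg k lam 2 ^ 2 = xg k lam 1 ^ 2 + xg k lam 0 ^ 2 := by
  simp only [xg, ← map_pow, ← map_add]
  refine Ideal.Quotient.eq.mpr (Ideal.subset_span ?_)
  exact Set.mem_insert_iff.mpr (Or.inl (by ring))

theorem xg_three_sq :
    xg k lam 3 ^ 2 = xg k lam 1 ^ 2 + algebraMap k (Sring k lam) lam * xg k lam 0 ^ 2 := by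
  simp only [xg, ← map_pow]
  refine Ideal.Quotient.eq.mpr (Ideal.subset_span ?_)
  exact Set.mem_insert_of_mem _ (Set.mem_singleton_of_eq (by rw [MvPolynomial.algebraMap_eq]; ring))

noncomputable def fromTowerB : TowerB k →ₐ[k] Sring k lam :=
  AdjoinRoot.liftAlgHom (towerPolyB k) (aeval ![xg k lam 0, xg k lam 1]) (xg k lam 2) <| by
    simp only [towerPolyB, Polynomial.eval₂_sub, Polynomial.eval₂_pow, Polynomial.eval₂_X,
      Polynomial.eval₂_C]
    simp [xg_two_sq]

noncomputable def fromTower : TowerC k lam →ₐ[k] Sring k lam :=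
  AdjoinRoot.liftAlgHom (towerPolyC k lam) (fromTowerB k lam) (xg k lam 3) <| by
    simp only [towerPolyC, Polynomial.eval₂_sub, Polynomial.eval₂_pow, Polynomial.eval₂_X,
      Polynomial.eval₂_C]
    simp [fromTowerB, xg_three_sq]

theorem toTower_xg (i : Fin 4) : toTower k lam (xg k lam i) = towerGen k lam i :=
  aeval_X (towerGen k lam) i

theorem fromTower_towerGen (i : Fin 4) : fromTower k lam (towerGen k lam i) = xg k lam i := by
  fin_cases i <;> simp [fromTower, fromTowerB, towerGen]

theorem toTower_injective : Function.Injective (toTower k lam) := by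
  have h : (fromTower k lam).comp (toTower k lam) = AlgHom.id k _ := by
    refine Ideal.Quotient.algHom_ext _ (MvPolynomial.algHom_ext fun i => ?_)
    change fromTower k lam (toTower k lam (xg k lam i)) = xg k lam i
    rw [toTower_xg, fromTower_towerGen]
  exact Function.LeftInverse.injective (AlgHom.congr_fun h)

theorem xg_mem_nonZeroDivisors (i : Fin 4) : xg k lam i ∈ (Sring k lam)⁰ :=
  mem_nonZeroDivisors_of_injective (toTower_injective k lam)
    ((toTower_xg k lam i).symm ▸ towerGen_mem_nonZeroDivisors k lam i)

end Tower

def parity (i : Fin 4) : Lgrp →+ ZMod 2 :=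
  QuotientAddGroup.lift Lrel ((Int.castAddHom (ZMod 2)).comp (Pi.evalAddMonoidHom _ i)) <| by
    rw [Lrel, AddSubgroup.closure_le]
    rintro y (rfl | rfl | rfl) <;> simp [Pi.single_apply] <;> split_ifs <;> decide

theorem parity_xL (i j : Fin 4) : parity i (xL j) = if i = j then 1 else 0 := by
  rw [parity, xL, QuotientAddGroup.lift_mk]
  simp [Pi.single_apply]

theorem parity_cL (i : Fin 4) : parity i cL = 0 := by
  rw [cL, map_zsmul, two_zsmul, CharTwo.add_self_eq_zero]

theorem parity_sum_zsmul_xL (i : Fin 4) (l : Fin 4 → ℤ) : parity i (∑ j, l j • xL j) = l i := by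
  simp [parity_xL]

theorem parity_mdeg (i : Fin 4) (a : Fin 4 →₀ ℕ) : parity i (mdeg a) = a i := by
  rw [mdeg, parity_sum_zsmul_xL, Int.cast_natCast]

theorem mdeg_add_single (a : Fin 4 →₀ ℕ) (i : Fin 4) :
    mdeg (a + Finsupp.single i 1) = mdeg a + xL i := by
  simp [mdeg, Finset.sum_add_distrib, add_zsmul, Finsupp.single_apply]

section Graded

variable (k : Type*) [Field k] (lam : k)

theorem xg_mul_mk_monomial (i : Fin 4) (a : Fin 4 →₀ ℕ) :
    xg k lam i * Ideal.Quotient.mk (relIdeal k lam) (monomial a 1) =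
      Ideal.Quotient.mk (relIdeal k lam) (monomial (a + Finsupp.single i 1) 1) := by
  rw [xg, ← map_mul, X, monomial_mul, one_mul, add_comm]

theorem map_mulLeft_xg_Sx_le (i : Fin 4) (y : Lgrp) :
    (Sx k lam y).map (LinearMap.mulLeft k (xg k lam i)) ≤ Sx k lam (y + xL i) := by
  rw [Sx, Sx, Submodule.map_span, Submodule.span_le]
  rintro _ ⟨_, ⟨_, ⟨a, rfl, rfl⟩, rfl⟩, rfl⟩
  exact Submodule.subset_span
    ⟨_, ⟨a + Finsupp.single i 1, mdeg_add_single a i, rfl⟩, (xg_mul_mk_monomial k lam i a).symm⟩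

theorem Sx_le_map_mulLeft_xg {i : Fin 4} {x : Lgrp} (hx : parity i x = 1) :
    Sx k lam x ≤ (Sx k lam (x - xL i)).map (LinearMap.mulLeft k (xg k lam i)) := by
  rw [Sx, Submodule.span_le]
  rintro _ ⟨_, ⟨a, rfl, rfl⟩, rfl⟩
  have hai : Finsupp.single i 1 ≤ a := by
    rw [parity_mdeg] at hx
    refine Finsupp.single_le_iff.mpr (Nat.one_le_iff_ne_zero.mpr fun h => ?_)
    rw [h, Nat.cast_zero] at hx
    exact zero_ne_one hx
  have hdeg : mdeg (a - Finsupp.single i 1) = mdeg a - xL i := by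
    rw [eq_sub_iff_add_eq, ← mdeg_add_single, tsub_add_cancel_of_le hai]
  refine ⟨_, Submodule.subset_span ⟨_, ⟨_, hdeg, rfl⟩, rfl⟩, ?_⟩
  rw [LinearMap.mulLeft_apply, xg_mul_mk_monomial, tsub_add_cancel_of_le hai]

end Graded

theorem mul_xi_iso_general (k : Type*) [Field k]
    (lam : k)
    (i : Fin 4) (l : Fin 4 → ℤ) (m : ℤ)
    (hi : l i = 1)
    (x : Lgrp) (hx : x = ∑ j, l j • xL j + m • cL) :
    Submodule.map (LinearMap.mulLeft k (xg k lam i)) (Sx k lam (x - xL i)) = Sx k lam x ∧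
    ∀ v ∈ Sx k lam (x - xL i), xg k lam i * v = 0 → v = 0 := by
  have hpar : parity i x = 1 := by
    rw [hx, map_add, parity_sum_zsmul_xL, map_zsmul, parity_cL, smul_zero, add_zero, hi,
      Int.cast_one]
  refine ⟨le_antisymm ?_ (Sx_le_map_mulLeft_xg k lam hpar), fun v _ hv =>
    mem_nonZeroDivisors_iff_left.mp (xg_mem_nonZeroDivisors k lam i) v hv⟩
  simpa using map_mulLeft_xg_Sx_le k lam i (x - xL i)

/-- If `x = Σⱼ lⱼxⱼ + l·c` is in normal form with `lᵢ = 1` and `l ≥ 0`, then multiplication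
by `xᵢ` induces a `k`-linear isomorphism `S_{x − xᵢ} ≅ S_x`: it maps `S_{x − xᵢ}` onto `S_x`
and is injective on `S_{x − xᵢ}`. -/
theorem mul_xi_iso (k : Type*) [Field k] (hchar : ringChar k ≠ 2)
    (lam : k) (h0 : lam ≠ 0) (h1 : lam ≠ 1)
    (i : Fin 4) (l : Fin 4 → ℤ) (m : ℤ) (hl : ∀ j, l j = 0 ∨ l j = 1)
    (hi : l i = 1) (hm : 0 ≤ m)
    (x : Lgrp) (hx : x = ∑ j, l j • xL j + m • cL) :
    Submodule.map (LinearMap.mulLeft k (xg k lam i)) (Sx k lam (x - xL i)) = Sx k lam x ∧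
    ∀ v ∈ Sx k lam (x - xL i), xg k lam i * v = 0 → v = 0 :=
  mul_xi_iso_general k lam i l m hi x hx
end

section
/- Define ψ : ℚ → ℚ as follows: for x ∈ ℚ with integer part n = ⌊x⌋ and fractional part t = x − ⌊x⌋, set ψ(x) = n + (4 − 5t)/(3 − 4t) if t ≤ 2/3, and ψ(x) = n + (12 − 19t)/(5 − 8t) if t > 2/3. Then for every integer n and every natural number m, the m-fold iterate satisfies ψ^[m](n) = n + m + m/(2m+1). -/
/-- The slope transformation `ψ : ℚ → ℚ` realizing the suspension functor `[1]` on slopes: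
for `x` with integer part `n = ⌊x⌋` and fractional part `t = x − ⌊x⌋`,
`ψ(x) = n + (4 − 5t)/(3 − 4t)` if `t ≤ 2/3` and `ψ(x) = n + (12 − 19t)/(5 − 8t)` else. -/
def ψq (x : ℚ) : ℚ :=
  let n : ℤ := ⌊x⌋
  let t : ℚ := x - ⌊x⌋
  if t ≤ 2 / 3 then n + (4 - 5 * t) / (3 - 4 * t) else n + (12 - 19 * t) / (5 - 8 * t)

/-- For every integer `n` and natural number `m`, the `m`-fold iterate of `ψ` satisfies
`ψ^[m](n) = n + m + m/(2m+1)`. -/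
theorem psi_iterate_int (n : ℤ) (m : ℕ) :
    ψq^[m] (n : ℚ) = (n : ℚ) + m + (m : ℚ) / (2 * m + 1) := by
  induction m with
  | zero => simp
  | succ m ih =>
    rw [Function.iterate_succ_apply', ih]
    have hd : (0:ℚ) < 2 * m + 1 := by positivity
    have hfloor : ⌊(n : ℚ) + m + (m : ℚ) / (2 * m + 1)⌋ = n + m := by
      rw [Int.floor_eq_iff]
      constructor
      · push_cast
        have : (0:ℚ) ≤ (m : ℚ) / (2 * m + 1) := by positivity
        linarith
      · push_cast
        have : (m : ℚ) / (2 * m + 1) < 1 := by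
          rw [div_lt_one hd]; linarith
        linarith
    have ht : (n : ℚ) + m + (m : ℚ) / (2 * m + 1) - ((n:ℤ) + (m:ℤ) : ℤ) = (m : ℚ) / (2 * m + 1) := by
      push_cast; ring
    have hle : (m : ℚ) / (2 * m + 1) ≤ 2 / 3 := by
      rw [div_le_div_iff₀ hd (by norm_num)]
      push_cast; linarith
    unfold ψq
    simp only [hfloor, ht, hle, if_pos]
    have e1 : (4:ℚ) - 5 * ((m : ℚ) / (2 * m + 1)) = (3 * m + 4) / (2 * m + 1) := by
      field_simp; ring
    have e2 : (3:ℚ) - 4 * ((m : ℚ) / (2 * m + 1)) = (2 * m + 3) / (2 * m + 1) := by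
      field_simp; ring
    rw [e1, e2]
    rw [div_div_div_eq]
    have h13 : ((2:ℚ) * m + 1) * (2 * m + 3) ≠ 0 := by positivity
    push_cast
    have h23 : (2:ℚ) * m + 3 ≠ 0 := by positivity
    field_simp
    ring
end

section
/- Define φ : ℚ → ℚ as follows: for x ∈ ℚ with integer part n = ⌊x⌋ and fractional part t = x − ⌊x⌋, set φ(x) = n − (4 − 11t)/(3 − 8t) if t ≤ 1/3, and φ(x) = n + t/(1 − 4t) if t > 1/3. Then for every integer n and every natural number m, the m-fold iterate satisfies φ^[m](n) = n − m − m/(2m+1); equivalently, φ^[m](n) = 2n − ψ^[m](n), where ψ is defined by ψ(x) = ⌊x⌋ + (4 − 5t)/(3 − 4t) for t = x − ⌊x⌋ ≤ 2/3 and ψ(x) = ⌊x⌋ + (12 − 19t)/(5 − 8t) for t > 2/3. -/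
/-- The slope transformation `φ : ℚ → ℚ` realizing the loop functor `[−1]` on slopes:
for `x` with integer part `n = ⌊x⌋` and fractional part `t = x − ⌊x⌋`,
`φ(x) = n − (4 − 11t)/(3 − 8t)` if `t ≤ 1/3` and `φ(x) = n + t/(1 − 4t)` else. -/
def φq (x : ℚ) : ℚ :=
  let n : ℤ := ⌊x⌋
  let t : ℚ := x - ⌊x⌋
  if t ≤ 1 / 3 then n - (4 - 11 * t) / (3 - 8 * t) else n + t / (1 - 4 * t)

lemma floor_aux (k : ℤ) (u : ℚ) (h0 : 0 ≤ u) (h1 : u < 1) : ⌊(k:ℚ) + u⌋ = k := by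
  rw [add_comm, Int.floor_add_intCast, Int.floor_eq_zero_iff.2 ⟨h0, h1⟩, zero_add]

lemma phi_step (k : ℤ) (m : ℕ) :
    φq ((k:ℚ) - m - (m:ℚ)/(2*m+1)) = (k:ℚ) - (m+1) - ((m:ℚ)+1)/(2*((m:ℚ)+1)+1) := by
  cases m with
  | zero =>
      simp only [Nat.cast_zero, sub_zero, zero_div, zero_add, mul_zero]
      simp only [φq, Int.floor_intCast, sub_self]
      norm_num
      linarith
  | succ m =>
      have hd : (0:ℚ) < 2*(m:ℚ)+3 := by positivity
      set u : ℚ := ((m:ℚ)+2)/(2*(m:ℚ)+3) with hu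
      have h0 : 0 ≤ u := by positivity
      have h1 : u < 1 := by rw [hu, div_lt_one hd]; linarith
      have hx : (k:ℚ) - (m+1:ℕ) - ((m+1:ℕ):ℚ)/(2*((m+1:ℕ):ℚ)+1)
          = ((k - m - 2 : ℤ):ℚ) + u := by
        push_cast; rw [hu]; field_simp; ring
      rw [hx]
      have hfl : ⌊((k - m - 2 : ℤ):ℚ) + u⌋ = k - m - 2 := floor_aux _ _ h0 h1
      simp only [φq, hfl]
      rw [add_sub_cancel_left]
      rw [if_neg (by rw [hu, div_le_div_iff₀ hd (by norm_num)]; push_cast; intro h; linarith)]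
      have hne : 1 - 4*u ≠ 0 := by
        rw [hu]; intro h
        have : (2*(m:ℚ)+3) - 4*((m:ℚ)+2) = 0 := by
          field_simp at h; linarith
        linarith
      have h3 : (2*(m:ℚ)+3) ≠ 0 := by positivity
      have h5 : (2*(m:ℚ)+5) ≠ 0 := by positivity
      have hval : u / (1 - 4*u) = -(((m:ℚ)+2)/(2*(m:ℚ)+5)) := by
        rw [div_eq_iff hne, hu]; field_simp; ring
      rw [hval]
      push_cast
      field_simp
      ring

lemma psi_step (k : ℤ) (m : ℕ) :
    ψq ((k:ℚ) + m + (m:ℚ)/(2*m+1)) = (k:ℚ) + (m+1) + ((m:ℚ)+1)/(2*((m:ℚ)+1)+1) := by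
  have hd : (0:ℚ) < 2*(m:ℚ)+1 := by positivity
  set u : ℚ := (m:ℚ)/(2*(m:ℚ)+1) with hu
  have h0 : 0 ≤ u := by positivity
  have h1 : u < 1 := by rw [hu, div_lt_one hd]; linarith
  have hx : (k:ℚ) + m + (m:ℚ)/(2*m+1) = ((k + m : ℤ):ℚ) + u := by push_cast; ring
  rw [hx]
  have hfl : ⌊((k + m : ℤ):ℚ) + u⌋ = k + m := floor_aux _ _ h0 h1
  simp only [ψq, hfl]
  rw [add_sub_cancel_left]
  rw [if_pos (by rw [hu, div_le_div_iff₀ hd (by norm_num)]; linarith)]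
  have hne : 3 - 4*u ≠ 0 := by
    rw [hu]; intro h
    have : 3*(2*(m:ℚ)+1) - 4*(m:ℚ) = 0 := by field_simp at h; linarith
    linarith
  have h1' : (2*(m:ℚ)+1) ≠ 0 := by positivity
  have h3 : (2*(m:ℚ)+3) ≠ 0 := by positivity
  have hval : (4 - 5*u) / (3 - 4*u) = (3*(m:ℚ)+4)/(2*(m:ℚ)+3) := by
    rw [div_eq_iff hne, hu]; field_simp; ring
  rw [hval]
  push_cast
  field_simp
  ring

/-- For every integer `n` and natural number `m`, the `m`-fold iterate of `φ` satisfies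
`φ^[m](n) = n − m − m/(2m+1)`; equivalently `φ^[m](n) = 2n − ψ^[m](n)`. -/
theorem phi_iterate_int (n : ℤ) (m : ℕ) :
    φq^[m] (n : ℚ) = (n : ℚ) - m - (m : ℚ) / (2 * m + 1) ∧
    φq^[m] (n : ℚ) = 2 * (n : ℚ) - ψq^[m] (n : ℚ) := by
  have key : ∀ m : ℕ, φq^[m] (n : ℚ) = (n : ℚ) - m - (m : ℚ) / (2 * m + 1) ∧
      ψq^[m] (n : ℚ) = (n : ℚ) + m + (m : ℚ) / (2 * m + 1) := by
    intro m
    induction m with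
    | zero => simp
    | succ m ih =>
        constructor
        · rw [Function.iterate_succ_apply', ih.1, phi_step]; push_cast; ring
        · rw [Function.iterate_succ_apply', ih.2, psi_step]; push_cast; ring
  exact ⟨(key m).1, by rw [(key m).1, (key m).2]; ring⟩
end

section
/- Define φ, ψ : ℚ → ℚ as follows: for x ∈ ℚ with n = ⌊x⌋ and t = x − ⌊x⌋, set φ(x) = n − (4 − 11t)/(3 − 8t) if t ≤ 1/3 and φ(x) = n + t/(1 − 4t) if t > 1/3; set ψ(x) = n + (4 − 5t)/(3 − 4t) if t ≤ 2/3 and ψ(x) = n + (12 − 19t)/(5 − 8t) if t > 2/3. Then φ and ψ are mutually inverse bijections of ℚ: ψ(φ(x)) = x and φ(ψ(x)) = x for all x ∈ ℚ. -/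
/-!
On each unit interval `[n, n + 1]` both `φ` and `ψ` are given by two Möbius transformations,
and the two formulas agree at the break points (including at `n + 1`, seen from the next
interval), so each formula is valid on a closed piece. `φ` maps `[n, n + 1/3]` onto
`[n - 4/3, n - 1]` and `[n + 1/3, n + 1]` onto `[n - 1, n - 1/3]`; `ψ` maps these two
images back by the inverse Möbius transformations, and symmetrically for `φ ∘ ψ`.
-/

lemma Int.floor_intCast_add_of_mem_Ico {R : Type*} [Ring R] [LinearOrder R] [IsOrderedRing R]
    [FloorRing R] {m : ℤ} {s : R} (hs : s ∈ Set.Ico 0 1) : ⌊(m : R) + s⌋ = m := by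
  rw [Int.floor_intCast_add, Int.floor_eq_zero_iff.mpr hs, add_zero]

lemma φq_intCast_add {m : ℤ} {s : ℚ} (hs : s ∈ Set.Ico 0 1) :
    φq (m + s) = if s ≤ 1 / 3 then m - (4 - 11 * s) / (3 - 8 * s) else m + s / (1 - 4 * s) := by
  simp only [φq, Int.floor_intCast_add_of_mem_Ico hs, add_sub_cancel_left]

lemma ψq_intCast_add {m : ℤ} {s : ℚ} (hs : s ∈ Set.Ico 0 1) :
    ψq (m + s) =
      if s ≤ 2 / 3 then m + (4 - 5 * s) / (3 - 4 * s) else m + (12 - 19 * s) / (5 - 8 * s) := by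
  simp only [ψq, Int.floor_intCast_add_of_mem_Ico hs, add_sub_cancel_left]

lemma φq_intCast_add_of_le_one_third {m : ℤ} {s : ℚ} (h₀ : 0 ≤ s) (h : s ≤ 1 / 3) :
    φq (m + s) = m - (4 - 11 * s) / (3 - 8 * s) := by
  rw [φq_intCast_add ⟨h₀, by linarith⟩, if_pos h]

lemma φq_intCast_add_of_one_third_le {m : ℤ} {s : ℚ} (h : 1 / 3 ≤ s) (h₁ : s ≤ 1) :
    φq (m + s) = m + s / (1 - 4 * s) := by
  rcases h.eq_or_lt with rfl | h
  · rw [φq_intCast_add_of_le_one_third (by norm_num) le_rfl]; norm_num; ring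
  rcases h₁.eq_or_lt with rfl | h₁
  · rw [show (m : ℚ) + 1 = ((m + 1 : ℤ) : ℚ) + 0 by push_cast; ring,
      φq_intCast_add_of_le_one_third le_rfl (by norm_num)]
    push_cast; ring
  · rw [φq_intCast_add ⟨by linarith, h₁⟩, if_neg h.not_ge]

lemma ψq_intCast_add_of_le_two_thirds {m : ℤ} {s : ℚ} (h₀ : 0 ≤ s) (h : s ≤ 2 / 3) :
    ψq (m + s) = m + (4 - 5 * s) / (3 - 4 * s) := by
  rw [ψq_intCast_add ⟨h₀, by linarith⟩, if_pos h]

lemma ψq_intCast_add_of_two_thirds_le {m : ℤ} {s : ℚ} (h : 2 / 3 ≤ s) (h₁ : s ≤ 1) :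
    ψq (m + s) = m + (12 - 19 * s) / (5 - 8 * s) := by
  rcases h.eq_or_lt with rfl | h
  · rw [ψq_intCast_add_of_le_two_thirds (by norm_num) le_rfl]; norm_num
  rcases h₁.eq_or_lt with rfl | h₁
  · rw [show (m : ℚ) + 1 = ((m + 1 : ℤ) : ℚ) + 0 by push_cast; ring,
      ψq_intCast_add_of_le_two_thirds le_rfl (by norm_num)]
    push_cast; ring
  · rw [ψq_intCast_add ⟨by linarith, h₁⟩, if_neg h.not_ge]

lemma ψq_φq_intCast_add_of_le_one_third {n : ℤ} {t : ℚ} (h₀ : 0 ≤ t) (h : t ≤ 1 / 3) :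
    ψq (φq (n + t)) = n + t := by
  have hd : 0 < 3 - 8 * t := by linarith
  set s := (2 - 5 * t) / (3 - 8 * t) with hs
  have hsd : s * (3 - 8 * t) = 2 - 5 * t := div_mul_cancel₀ _ hd.ne'
  have hs₀ : 2 / 3 ≤ s := by rw [hs, le_div_iff₀ hd]; linarith
  have hs₁ : s ≤ 1 := by rw [hs, div_le_one hd]; linarith
  have hφ : (4 - 11 * t) / (3 - 8 * t) = 2 - s := by
    rw [div_eq_iff hd.ne']; linear_combination hsd
  have hψ : (12 - 19 * s) / (5 - 8 * s) = 2 + t := by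
    rw [div_eq_iff (by linarith)]; linear_combination -hsd
  calc ψq (φq (n + t)) = ψq ((n - 2 : ℤ) + s) := by
        rw [φq_intCast_add_of_le_one_third h₀ h, hφ]; push_cast; ring
    _ = (n - 2 : ℤ) + (12 - 19 * s) / (5 - 8 * s) := ψq_intCast_add_of_two_thirds_le hs₀ hs₁
    _ = n + t := by rw [hψ]; push_cast; ring

lemma ψq_φq_intCast_add_of_one_third_le {n : ℤ} {t : ℚ} (h : 1 / 3 ≤ t) (h₁ : t ≤ 1) :
    ψq (φq (n + t)) = n + t := by
  have hd : 1 - 4 * t < 0 := by linarith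
  set s := (1 - 3 * t) / (1 - 4 * t) with hs
  have hsd : s * (1 - 4 * t) = 1 - 3 * t := div_mul_cancel₀ _ hd.ne
  have hs₀ : 0 ≤ s := by rw [hs, le_div_iff_of_neg hd]; linarith
  have hs₁ : s ≤ 2 / 3 := by rw [hs, div_le_iff_of_neg hd]; linarith
  have hφ : t / (1 - 4 * t) = s - 1 := by
    rw [div_eq_iff hd.ne]; linear_combination -hsd
  have hψ : (4 - 5 * s) / (3 - 4 * s) = 1 + t := by
    rw [div_eq_iff (by linarith)]; linear_combination -hsd
  calc ψq (φq (n + t)) = ψq ((n - 1 : ℤ) + s) := by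
        rw [φq_intCast_add_of_one_third_le h h₁, hφ]; push_cast; ring
    _ = (n - 1 : ℤ) + (4 - 5 * s) / (3 - 4 * s) := ψq_intCast_add_of_le_two_thirds hs₀ hs₁
    _ = n + t := by rw [hψ]; push_cast; ring

lemma φq_ψq_intCast_add_of_le_two_thirds {n : ℤ} {t : ℚ} (h₀ : 0 ≤ t) (h : t ≤ 2 / 3) :
    φq (ψq (n + t)) = n + t := by
  have hd : 0 < 3 - 4 * t := by linarith
  set s := (1 - t) / (3 - 4 * t) with hs
  have hsd : s * (3 - 4 * t) = 1 - t := div_mul_cancel₀ _ hd.ne'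
  have hs₀ : 1 / 3 ≤ s := by rw [hs, le_div_iff₀ hd]; linarith
  have hs₁ : s ≤ 1 := by rw [hs, div_le_one hd]; linarith
  have hψ : (4 - 5 * t) / (3 - 4 * t) = 1 + s := by
    rw [div_eq_iff hd.ne']; linear_combination -hsd
  have hφ : s / (1 - 4 * s) = t - 1 := by
    rw [div_eq_iff (by linarith)]; linear_combination -hsd
  calc φq (ψq (n + t)) = φq ((n + 1 : ℤ) + s) := by
        rw [ψq_intCast_add_of_le_two_thirds h₀ h, hψ]; push_cast; ring
    _ = (n + 1 : ℤ) + s / (1 - 4 * s) := φq_intCast_add_of_one_third_le hs₀ hs₁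
    _ = n + t := by rw [hφ]; push_cast; ring

lemma φq_ψq_intCast_add_of_two_thirds_le {n : ℤ} {t : ℚ} (h : 2 / 3 ≤ t) (h₁ : t ≤ 1) :
    φq (ψq (n + t)) = n + t := by
  have hd : 5 - 8 * t < 0 := by linarith
  set s := (2 - 3 * t) / (5 - 8 * t) with hs
  have hsd : s * (5 - 8 * t) = 2 - 3 * t := div_mul_cancel₀ _ hd.ne
  have hs₀ : 0 ≤ s := by rw [hs, le_div_iff_of_neg hd]; linarith
  have hs₁ : s ≤ 1 / 3 := by rw [hs, div_le_iff_of_neg hd]; linarith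
  have hψ : (12 - 19 * t) / (5 - 8 * t) = 2 + s := by
    rw [div_eq_iff hd.ne]; linear_combination -hsd
  have hφ : (4 - 11 * s) / (3 - 8 * s) = 2 - t := by
    rw [div_eq_iff (by linarith)]; linear_combination hsd
  calc φq (ψq (n + t)) = φq ((n + 2 : ℤ) + s) := by
        rw [ψq_intCast_add_of_two_thirds_le h h₁, hψ]; push_cast; ring
    _ = (n + 2 : ℤ) - (4 - 11 * s) / (3 - 8 * s) := φq_intCast_add_of_le_one_third hs₀ hs₁
    _ = n + t := by rw [hφ]; push_cast; ring

/-- `φ` and `ψ` are mutually inverse bijections of `ℚ`. -/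
theorem phi_psi_inverse : ∀ x : ℚ, ψq (φq x) = x ∧ φq (ψq x) = x := by
  intro x
  rw [← Int.floor_add_fract x]
  have h₀ := Int.fract_nonneg x
  have h₁ := (Int.fract_lt_one x).le
  constructor
  · rcases le_total (Int.fract x) (1 / 3) with h | h
    · exact ψq_φq_intCast_add_of_le_one_third h₀ h
    · exact ψq_φq_intCast_add_of_one_third_le h h₁
  · rcases le_total (Int.fract x) (2 / 3) with h | h
    · exact φq_ψq_intCast_add_of_le_two_thirds h₀ h
    · exact φq_ψq_intCast_add_of_two_thirds_le h h₁
end
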